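/- Let a ∈ (0,1/4) and set w_a := z_a'/x_a. Then: (i) w_a'' = (1 + 4γ_a)·w_a - 2w_a³ and (w_a')² = (1 - w_a²)(w_a² - 4γ_a) on ℝ; (ii) 0 < w_a ≤ 1, w_a(0) = 1, w_a is even and τ_a-periodic; (iii) the minimum of w_a equals 2√(γ_a) and is attained at t = τ_a/2, and x_a(τ_a/2)² = γ_a. -/

import Mathlib

noncomputable section

open Real Set

/-- Cross product in ℝ³. -/
def cross3 (v w : Fin 3 → ℝ) : Fin 3 → ℝ :=
  ![v 1 * w 2 - v 2 * w 1, v 2 * w 0 - v 0 * w 2, v 0 * w 1 - v 1 * w 0]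

/-- Dot product in ℝ³. -/
def dot3 (v w : Fin 3 → ℝ) : ℝ := v 0 * w 0 + v 1 * w 1 + v 2 * w 2

/-- Euclidean norm in ℝ³. -/
def norm3 (v : Fin 3 → ℝ) : ℝ := Real.sqrt (dot3 v v)

/-- Partial derivative in the first variable of a curried map into ℝ³. -/
def Dt3 (Y : ℝ → ℝ → Fin 3 → ℝ) : ℝ → ℝ → Fin 3 → ℝ :=
  fun t θ i => deriv (fun s => Y s θ i) t

/-- Partial derivative in the second variable of a curried map into ℝ³. -/
def Dth3 (Y : ℝ → ℝ → Fin 3 → ℝ) : ℝ → ℝ → Fin 3 → ℝ :=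
  fun t θ i => deriv (fun s => Y t s i) θ

/-- Gauss map (unit normal) of a parametrized surface. -/
def gauss3 (Y : ℝ → ℝ → Fin 3 → ℝ) : ℝ → ℝ → Fin 3 → ℝ :=
  fun t θ i => cross3 (Dt3 Y t θ) (Dth3 Y t θ) i / norm3 (cross3 (Dt3 Y t θ) (Dth3 Y t θ))

/-- Mean curvature of a parametrized surface (Gaussian notation). -/
def meanCurv (Y : ℝ → ℝ → Fin 3 → ℝ) (t θ : ℝ) : ℝ :=
  (dot3 (Dt3 Y t θ) (Dt3 Y t θ) * dot3 (Dth3 (Dth3 Y) t θ) (gauss3 Y t θ)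
    - 2 * dot3 (Dt3 Y t θ) (Dth3 Y t θ) * dot3 (Dth3 (Dt3 Y) t θ) (gauss3 Y t θ)
    + dot3 (Dth3 Y t θ) (Dth3 Y t θ) * dot3 (Dt3 (Dt3 Y) t θ) (gauss3 Y t θ))
  / (2 * (dot3 (Dt3 Y t θ) (Dt3 Y t θ) * dot3 (Dth3 Y t θ) (Dth3 Y t θ)
      - dot3 (Dt3 Y t θ) (Dth3 Y t θ) ^ 2))

/-- `x` is the unduloid profile function with neck-size `a`. -/
def IsUnduloid (a : ℝ) (x : ℝ → ℝ) : Prop :=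
  ContDiff ℝ 2 x ∧
  (∀ t, deriv (deriv x) t = (1 - 2 * (a * (1 - a))) * x t - 2 * (x t) ^ 3) ∧
  x 0 = 1 - a ∧ deriv x 0 = 0

/-- The height function `z_a`. -/
def zshape (a : ℝ) (x : ℝ → ℝ) : ℝ → ℝ :=
  fun t => ∫ s in (0:ℝ)..t, (a * (1 - a) + x s ^ 2)

/-- `T` is the minimal (positive) period of `x`. -/
def IsMinPeriod (x : ℝ → ℝ) (T : ℝ) : Prop :=
  0 < T ∧ Function.Periodic x T ∧ ∀ T', 0 < T' → Function.Periodic x T' → T ≤ T'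

/-- The potential of the Jacobi operator. -/
def pfun (a : ℝ) (x : ℝ → ℝ) : ℝ → ℝ :=
  fun t => x t ^ 2 + (a * (1 - a)) ^ 2 / x t ^ 2

/-- `ψ` is the even solution of `ψ'' + 2 p_a ψ = 0`, `ψ(0)=1`, `ψ'(0)=0`. -/
def IsPsi0 (a : ℝ) (x : ℝ → ℝ) (ψ : ℝ → ℝ) : Prop :=
  ContDiff ℝ 2 ψ ∧ (∀ t, deriv (deriv ψ) t + 2 * pfun a x t * ψ t = 0) ∧
  ψ 0 = 1 ∧ deriv ψ 0 = 0

/-- The generalized toroidal unduloid parametrization `X_{ε,a}`. -/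
def Xtor (x z : ℝ → ℝ) (ε : ℝ) : ℝ → ℝ → Fin 3 → ℝ :=
  fun t θ =>
    ![x t * Real.cos θ,
      (ε⁻¹ + x t * Real.sin θ) * Real.cos (ε * z t),
      (ε⁻¹ + x t * Real.sin θ) * Real.sin (ε * z t)]

/-- Normal graph over a parametrized surface. -/
def normalGraph (X : ℝ → ℝ → Fin 3 → ℝ) (φ : ℝ → ℝ → ℝ) : ℝ → ℝ → Fin 3 → ℝ :=
  fun t θ i => X t θ i + φ t θ * gauss3 X t θ i

/-- Rotation of angle σ about the x₁-axis. -/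
def rot1 (σ : ℝ) (v : Fin 3 → ℝ) : Fin 3 → ℝ :=
  ![v 0, Real.cos σ * v 1 - Real.sin σ * v 2, Real.sin σ * v 1 + Real.cos σ * v 2]

/-- Partial derivative in `t` of a scalar function. -/
def dt (f : ℝ → ℝ → ℝ) : ℝ → ℝ → ℝ := fun t θ => deriv (fun s => f s θ) t

/-- Partial derivative in `θ` of a scalar function. -/
def dth (f : ℝ → ℝ → ℝ) : ℝ → ℝ → ℝ := fun t θ => deriv (fun s => f t s) θ

/-- Global α-Hölder continuity of a scalar function on ℝ². -/
def Holder2 (α : ℝ) (f : ℝ → ℝ → ℝ) : Prop :=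
  ∃ C : ℝ, ∀ p q : ℝ × ℝ, |f p.1 p.2 - f q.1 q.2| ≤ C * dist p q ^ α

/-- Membership in the space 𝒳_a of C^{2,α} doubly periodic symmetric functions. -/
def MemX (α τ : ℝ) (φ : ℝ → ℝ → ℝ) : Prop :=
  ContDiff ℝ 2 (fun p : ℝ × ℝ => φ p.1 p.2) ∧
  Holder2 α (dt (dt φ)) ∧ Holder2 α (dth (dt φ)) ∧ Holder2 α (dth (dth φ)) ∧
  (∀ θ, Function.Periodic (fun t => φ t θ) (2 * τ)) ∧
  (∀ t, Function.Periodic (fun θ => φ t θ) (2 * Real.pi)) ∧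
  (∀ t θ, φ (-t) θ = φ t θ) ∧
  (∀ t θ, φ t (Real.pi / 2 - θ) = φ t (Real.pi / 2 + θ))

/-- Membership in the space 𝒴_a of C^{0,α} doubly periodic symmetric functions. -/
def MemY (α τ : ℝ) (f : ℝ → ℝ → ℝ) : Prop :=
  Continuous (fun p : ℝ × ℝ => f p.1 p.2) ∧ Holder2 α f ∧
  (∀ θ, Function.Periodic (fun t => f t θ) (2 * τ)) ∧
  (∀ t, Function.Periodic (fun θ => f t θ) (2 * Real.pi)) ∧
  (∀ t θ, f (-t) θ = f t θ) ∧
  (∀ t θ, f t (Real.pi / 2 - θ) = f t (Real.pi / 2 + θ))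

/-- Integral over the fundamental rectangle Q_τ = [-τ,τ]×[-π,π]. -/
def intQ (τ : ℝ) (f : ℝ → ℝ → ℝ) : ℝ :=
  ∫ t in (-τ)..τ, ∫ θ in (-Real.pi)..Real.pi, f t θ

/-- The strip [s-δ, s+δ] × [-π,π]. -/
def strip (δ s : ℝ) : Set (ℝ × ℝ) :=
  Set.Icc (s - δ) (s + δ) ×ˢ Set.Icc (-Real.pi) Real.pi

/-- Sup norm of a scalar function on a set. -/
def supOn (S : Set (ℝ × ℝ)) (g : ℝ → ℝ → ℝ) : ℝ :=
  sSup ((fun p : ℝ × ℝ => |g p.1 p.2|) '' S)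

/-- α-Hölder seminorm of a scalar function on a set. -/
def holdOn (α : ℝ) (S : Set (ℝ × ℝ)) (g : ℝ → ℝ → ℝ) : ℝ :=
  sSup {r : ℝ | ∃ p ∈ S, ∃ q ∈ S, p ≠ q ∧ r = |g p.1 p.2 - g q.1 q.2| / dist p q ^ α}

/-- C^{0,α} norm on a set. -/
def c0αOn (α : ℝ) (S : Set (ℝ × ℝ)) (g : ℝ → ℝ → ℝ) : ℝ :=
  supOn S g + holdOn α S g

/-- C^{2,α} norm on a set. -/
def c2αOn (α : ℝ) (S : Set (ℝ × ℝ)) (g : ℝ → ℝ → ℝ) : ℝ :=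
  c0αOn α S g + c0αOn α S (dt g) + c0αOn α S (dth g)
    + c0αOn α S (dt (dt g)) + c0αOn α S (dth (dt g)) + c0αOn α S (dth (dth g))

/-- Weighted norm ‖f‖_{a,0,μ}. -/
def wnorm0 (α δ μ : ℝ) (x : ℝ → ℝ) (f : ℝ → ℝ → ℝ) : ℝ :=
  sSup {r : ℝ | ∃ s : ℝ, r = x s ^ (-μ) * c0αOn α (strip δ s) f}

/-- Weighted norm ‖f‖_{a,2,μ}. -/
def wnorm2 (α δ μ : ℝ) (x : ℝ → ℝ) (f : ℝ → ℝ → ℝ) : ℝ :=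
  sSup {r : ℝ | ∃ s : ℝ, r = x s ^ (-μ) * c2αOn α (strip δ s) f}

/-!
The profile `x` solves the Duffing-type equation `x'' = c x - 2 x³` with `c = 1 - 2γ` and first
integral `x'² = (x² - a²)((1 - a)² - x²)`; hence `a ≤ x ≤ 1 - a`, and `γ / x` is again a solution.
Uniqueness among bounded solutions makes `x` even, forces `x(τ) = a` (the alternative
`x(τ) = 1 - a` would make `τ` a period), and gives `x(t + τ) = γ / x(t)`. Since `z' = γ + x²`,
`w = x + γ / x` is a sum of two solutions with constant product `γ`, hence solves
`w'' = (c + 6γ) w - 2 w³`; the rest follows from `w(t + τ) = w(t)`, `w(0) = 1` and AM-GM.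
-/

def IsDuffingSolution (c : ℝ) (f : ℝ → ℝ) : Prop :=
  ContDiff ℝ 2 f ∧ ∀ t, deriv (deriv f) t = c * f t - 2 * f t ^ 3

lemma deriv_eq_zero_of_forall_add_eq_sub {f : ℝ → ℝ} {τ : ℝ}
    (h : ∀ s, f (τ + s) = f (τ - s)) : deriv f τ = 0 := by
  have hderiv : deriv (fun s => f (τ + s)) 0 = deriv (fun s => f (τ - s)) 0 := by
    rw [funext h]
  rw [deriv_comp_const_add, deriv_comp_const_sub, add_zero, sub_zero] at hderiv
  linarith

lemma Function.Even.deriv_zero {f : ℝ → ℝ} (hf : Function.Even f) : deriv f 0 = 0 :=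
  deriv_eq_zero_of_forall_add_eq_sub fun s => by rw [zero_add, zero_sub, hf]

lemma lipschitzOnWith_duffingField (c M : ℝ) :
    LipschitzOnWith (1 + |c| + 6 * M ^ 2).toNNReal
      (fun p : ℝ × ℝ => (p.2, c * p.1 - 2 * p.1 ^ 3)) {p | |p.1| ≤ M} := by
  refine LipschitzOnWith.of_dist_le' fun p hp q hq => ?_
  replace hp : |p.1| ≤ M := hp
  replace hq : |q.1| ≤ M := hq
  have h1 : |p.1 - q.1| ≤ dist p q := le_max_left _ _
  have h2 : |p.2 - q.2| ≤ dist p q := le_max_right _ _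
  have hcoeff : |c - 2 * (p.1 ^ 2 + p.1 * q.1 + q.1 ^ 2)| ≤ |c| + 6 * M ^ 2 := by
    have hpq : |p.1 * q.1| ≤ M ^ 2 := by
      rw [abs_mul, sq]; exact mul_le_mul hp hq (abs_nonneg _) ((abs_nonneg _).trans hp)
    have hp2 : p.1 ^ 2 ≤ M ^ 2 := sq_le_sq' (abs_le.mp hp).1 (abs_le.mp hp).2
    have hq2 : q.1 ^ 2 ≤ M ^ 2 := sq_le_sq' (abs_le.mp hq).1 (abs_le.mp hq).2
    have hsum := abs_add_three (p.1 ^ 2) (p.1 * q.1) (q.1 ^ 2)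
    rw [abs_of_nonneg (sq_nonneg p.1), abs_of_nonneg (sq_nonneg q.1)] at hsum
    have := abs_sub c (2 * (p.1 ^ 2 + p.1 * q.1 + q.1 ^ 2))
    rw [abs_mul, abs_two] at this
    linarith
  have hdist := dist_nonneg (x := p) (y := q)
  refine max_le ?_ ?_
  · rw [Real.dist_eq]; nlinarith [abs_nonneg c]
  · rw [Real.dist_eq, show c * p.1 - 2 * p.1 ^ 3 - (c * q.1 - 2 * q.1 ^ 3)
        = (c - 2 * (p.1 ^ 2 + p.1 * q.1 + q.1 ^ 2)) * (p.1 - q.1) by ring, abs_mul]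
    calc _ ≤ (|c| + 6 * M ^ 2) * dist p q :=
          mul_le_mul hcoeff h1 (abs_nonneg _) (by positivity)
      _ ≤ _ := by nlinarith

namespace IsDuffingSolution

variable {c : ℝ} {f g : ℝ → ℝ}

lemma differentiable (hf : IsDuffingSolution c f) : Differentiable ℝ f :=
  hf.1.differentiable (by norm_num)

lemma differentiable_deriv (hf : IsDuffingSolution c f) : Differentiable ℝ (deriv f) :=
  (hf.1.iterate_deriv' 1 1).differentiable (by norm_num)

lemma hasDerivAt_deriv (hf : IsDuffingSolution c f) (t : ℝ) :
    HasDerivAt (deriv f) (c * f t - 2 * f t ^ 3) t :=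
  hf.2 t ▸ (hf.differentiable_deriv t).hasDerivAt

lemma energy_eq (hf : IsDuffingSolution c f) (t s : ℝ) :
    deriv f t ^ 2 - c * f t ^ 2 + f t ^ 4 = deriv f s ^ 2 - c * f s ^ 2 + f s ^ 4 := by
  have hE : ∀ u, HasDerivAt (fun u => deriv f u ^ 2 - c * f u ^ 2 + f u ^ 4) 0 u := fun u => by
    have hf' := (hf.differentiable u).hasDerivAt
    refine ((((hf.hasDerivAt_deriv u).fun_pow 2).sub ((hf'.fun_pow 2).const_mul c)).add
      (hf'.fun_pow 4)).congr_deriv ?_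
    norm_num
    ring
  exact is_const_of_deriv_eq_zero (fun u => (hE u).differentiableAt) (fun u => (hE u).deriv) t s

lemma deriv_sq_of_even (hf : IsDuffingSolution c f) (heven : Function.Even f) (t : ℝ) :
    deriv f t ^ 2 = c * (f t ^ 2 - f 0 ^ 2) - (f t ^ 4 - f 0 ^ 4) := by
  have h := hf.energy_eq t 0
  rw [heven.deriv_zero] at h
  linear_combination h

lemma eq_of_abs_le (hf : IsDuffingSolution c f) (hg : IsDuffingSolution c g) {M : ℝ}
    (hfM : ∀ t, |f t| ≤ M) (hgM : ∀ t, |g t| ≤ M) {t₀ : ℝ}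
    (h₀ : f t₀ = g t₀) (h₀' : deriv f t₀ = deriv g t₀) : f = g := by
  have hphase : ∀ {h : ℝ → ℝ}, IsDuffingSolution c h → (∀ t, |h t| ≤ M) → ∀ t,
      HasDerivAt (fun u => (h u, deriv h u)) (deriv h t, c * h t - 2 * h t ^ 3) t ∧
        (h t, deriv h t) ∈ {p : ℝ × ℝ | |p.1| ≤ M} :=
    fun hh hM t => ⟨(hh.differentiable t).hasDerivAt.prodMk (hh.hasDerivAt_deriv t), hM t⟩
  have hphase_eq := ODE_solution_unique_univ (fun _ => lipschitzOnWith_duffingField c M)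
    (hphase hf hfM) (hphase hg hgM) (Prod.ext h₀ h₀')
  exact funext fun t => congrArg Prod.fst (congrFun hphase_eq t)

lemma comp_neg (hf : IsDuffingSolution c f) : IsDuffingSolution c (fun t => f (-t)) := by
  refine ⟨hf.1.comp contDiff_neg, fun t => ?_⟩
  rw [funext fun t => deriv_comp_neg f t, deriv.fun_neg, deriv_comp_neg (deriv f) t, neg_neg,
    hf.2]

lemma comp_add_const (hf : IsDuffingSolution c f) (τ : ℝ) :
    IsDuffingSolution c (fun t => f (t + τ)) := by
  refine ⟨hf.1.comp (contDiff_id.add contDiff_const), fun t => ?_⟩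
  rw [funext fun t => deriv_comp_add_const f τ t, deriv_comp_add_const (deriv f) τ t, hf.2]

lemma hasDerivAt_const_div (hf : IsDuffingSolution c f) (hne : ∀ t, f t ≠ 0) (k t : ℝ) :
    HasDerivAt (fun s => k / f s) (-k * deriv f t / f t ^ 2) t :=
  ((hasDerivAt_const t k).div (hf.differentiable t).hasDerivAt (hne t)).congr_deriv (by ring)

lemma const_div (hf : IsDuffingSolution c f) (hne : ∀ t, f t ≠ 0) {k : ℝ}
    (henergy : ∀ t, deriv f t ^ 2 = c * f t ^ 2 - f t ^ 4 - k ^ 2) :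
    IsDuffingSolution c (fun t => k / f t) := by
  refine ⟨contDiff_const.div hf.1 hne, fun t => ?_⟩
  rw [funext fun s => (hf.hasDerivAt_const_div hne k s).deriv]
  have hderiv := (((hf.hasDerivAt_deriv t).const_mul (-k)).fun_div
    ((hf.differentiable t).hasDerivAt.fun_pow 2) (pow_ne_zero 2 (hne t)))
  rw [hderiv.deriv]
  have hf' := henergy t
  have hft := hne t
  field_simp
  linear_combination (2 * k * f t) * hf'

-- `f³ + g³ = (f + g)³ - 3 k (f + g)`
lemma add_of_mul_eq (hf : IsDuffingSolution c f) (hg : IsDuffingSolution c g) {k : ℝ}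
    (hfg : ∀ t, f t * g t = k) : IsDuffingSolution (c + 6 * k) (fun t => f t + g t) := by
  refine ⟨hf.1.add hg.1, fun t => ?_⟩
  have hderiv : deriv (fun t => f t + g t) = fun s => deriv f s + deriv g s :=
    funext fun s => deriv_fun_add (hf.differentiable s) (hg.differentiable s)
  rw [hderiv, deriv_fun_add (hf.differentiable_deriv t) (hg.differentiable_deriv t), hf.2, hg.2]
  linear_combination (6 * (f t + g t)) * hfg t

end IsDuffingSolution

lemma add_mul_one_sub_div_le_one {a y : ℝ} (ha : 0 < a) (hy : y ∈ Icc a (1 - a)) :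
    y + a * (1 - a) / y ≤ 1 := by
  have hy0 : 0 < y := ha.trans_le hy.1
  rw [← sub_nonneg, show 1 - (y + a * (1 - a) / y) = (y - a) * (1 - a - y) / y by
    field_simp; ring]
  exact div_nonneg (mul_nonneg (sub_nonneg.2 hy.1) (sub_nonneg.2 hy.2)) hy0.le

lemma two_mul_sqrt_le_add_div {γ y : ℝ} (hγ : 0 ≤ γ) (hy : 0 < y) : 2 * √γ ≤ y + γ / y := by
  rw [← sub_nonneg, show y + γ / y - 2 * √γ = (y - √γ) ^ 2 / y by
    field_simp; rw [sub_sq, Real.sq_sqrt hγ]; ring]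
  positivity

lemma deriv_zshape {a : ℝ} {x : ℝ → ℝ} (hx : Continuous x) (t : ℝ) :
    deriv (zshape a x) t = a * (1 - a) + x t ^ 2 :=
  Continuous.deriv_integral _ (by fun_prop) 0 t

namespace IsUnduloid

variable {a τ : ℝ} {x : ℝ → ℝ}

lemma isDuffingSolution (hx : IsUnduloid a x) :
    IsDuffingSolution (1 - 2 * (a * (1 - a))) x :=
  ⟨hx.1, hx.2.1⟩

lemma deriv_sq (hx : IsUnduloid a x) (t : ℝ) :
    deriv x t ^ 2 = (x t ^ 2 - a ^ 2) * ((1 - a) ^ 2 - x t ^ 2) := by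
  have h := hx.isDuffingSolution.energy_eq t 0
  rw [hx.2.2.1, hx.2.2.2] at h
  linear_combination h

lemma mem_Icc (hx : IsUnduloid a x) (ha : 0 < a) (ha' : a ≤ 1 / 2) (t : ℝ) :
    x t ∈ Icc a (1 - a) := by
  have hsq : ∀ t, a ^ 2 ≤ x t ^ 2 ∧ x t ^ 2 ≤ (1 - a) ^ 2 := fun t => by
    have h := hx.deriv_sq t
    constructor <;> nlinarith [sq_nonneg (deriv x t)]
  have hpos : 0 < x t := by
    by_contra! hle
    have h0 : (0 : ℝ) ∈ uIcc (x t) (x 0) := by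
      rw [mem_uIcc, hx.2.2.1]; exact Or.inl ⟨hle, by linarith⟩
    obtain ⟨s, -, hs⟩ := intermediate_value_uIcc hx.1.continuous.continuousOn h0
    nlinarith [hsq s]
  constructor <;> nlinarith [hsq t]

lemma pos (hx : IsUnduloid a x) (ha : 0 < a) (ha' : a ≤ 1 / 2) (t : ℝ) : 0 < x t :=
  ha.trans_le (hx.mem_Icc ha ha' t).1

lemma abs_apply_le (hx : IsUnduloid a x) (ha : 0 < a) (ha' : a ≤ 1 / 2) (t : ℝ) :
    |x t| ≤ 1 - a :=
  abs_le.2 ⟨by linarith [(hx.mem_Icc ha ha' t).1], (hx.mem_Icc ha ha' t).2⟩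

lemma even (hx : IsUnduloid a x) (ha : 0 < a) (ha' : a ≤ 1 / 2) : Function.Even x := by
  have hsol := hx.isDuffingSolution
  refine congrFun (hsol.comp_neg.eq_of_abs_le hsol (fun t => hx.abs_apply_le ha ha' (-t))
    (hx.abs_apply_le ha ha') (t₀ := 0) (by rw [neg_zero]) ?_)
  rw [deriv_comp_neg, neg_zero, hx.2.2.2, neg_zero]

lemma deriv_half_period (hx : IsUnduloid a x) (ha : 0 < a) (ha' : a ≤ 1 / 2)
    (hper : Function.Periodic x (2 * τ)) : deriv x τ = 0 :=
  deriv_eq_zero_of_forall_add_eq_sub fun s => by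
    rw [← hx.even ha ha', ← hper]
    congr 1
    ring

lemma apply_half_period (hx : IsUnduloid a x) (ha : 0 < a) (ha' : a ≤ 1 / 2)
    (hτ : IsMinPeriod x (2 * τ)) : x τ = a := by
  have hdτ := hx.deriv_half_period ha ha' hτ.2.1
  have hroot : (x τ ^ 2 - a ^ 2) * ((1 - a) ^ 2 - x τ ^ 2) = 0 := by
    rw [← hx.deriv_sq τ, hdτ, sq, mul_zero]
  obtain ⟨hlo, hhi⟩ := hx.mem_Icc ha ha' τ
  rcases mul_eq_zero.1 hroot with h | h
  · nlinarith
  · have hτ_eq : x τ = 1 - a := by nlinarith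
    have hsol := hx.isDuffingSolution
    have hper : Function.Periodic x τ := congrFun ((hsol.comp_add_const τ).eq_of_abs_le hsol
      (fun t => hx.abs_apply_le ha ha' (t + τ)) (hx.abs_apply_le ha ha') (t₀ := 0)
      (by rw [zero_add, hτ_eq, hx.2.2.1])
      (by rw [deriv_comp_add_const, zero_add, hdτ, hx.2.2.2]))
    linarith [hτ.1, hτ.2.2 τ (by linarith [hτ.1]) hper]

lemma isDuffingSolution_const_div (hx : IsUnduloid a x) (ha : 0 < a) (ha' : a ≤ 1 / 2) :
    IsDuffingSolution (1 - 2 * (a * (1 - a))) (fun t => a * (1 - a) / x t) :=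
  hx.isDuffingSolution.const_div (fun t => (hx.pos ha ha' t).ne')
    fun t => by linear_combination hx.deriv_sq t

lemma apply_add_half_period (hx : IsUnduloid a x) (ha : 0 < a) (ha' : a ≤ 1 / 2)
    (hτ : IsMinPeriod x (2 * τ)) (t : ℝ) : x (t + τ) = a * (1 - a) / x t := by
  have h1a : 1 - a ≠ 0 := by linarith
  have hbound (t : ℝ) : |a * (1 - a) / x t| ≤ 1 - a := by
    have hγ : 0 < a * (1 - a) := mul_pos ha (by linarith)
    rw [abs_of_pos (div_pos hγ (hx.pos ha ha' t)), div_le_iff₀ (hx.pos ha ha' t)]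
    nlinarith [(hx.mem_Icc ha ha' t).1]
  refine congrFun ((hx.isDuffingSolution.comp_add_const τ).eq_of_abs_le
    (hx.isDuffingSolution_const_div ha ha') (fun t => hx.abs_apply_le ha ha' (t + τ)) hbound
    (t₀ := 0) ?_ ?_) t
  · rw [zero_add, hx.apply_half_period ha ha' hτ, hx.2.2.1, mul_div_cancel_right₀ _ h1a]
  · rw [deriv_comp_add_const, zero_add, hx.deriv_half_period ha ha' hτ.2.1,
      (hx.isDuffingSolution.hasDerivAt_const_div
        (fun t => (hx.pos ha ha' t).ne') _ 0).deriv, hx.2.2.2]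
    ring

lemma sq_apply_quarter_period (hx : IsUnduloid a x) (ha : 0 < a) (ha' : a ≤ 1 / 2)
    (hτ : IsMinPeriod x (2 * τ)) : x (τ / 2) ^ 2 = a * (1 - a) := by
  have h := hx.apply_add_half_period ha ha' hτ (-(τ / 2))
  rw [show -(τ / 2) + τ = τ / 2 by ring, hx.even ha ha',
    eq_div_iff (hx.pos ha ha' _).ne'] at h
  linear_combination h

lemma deriv_zshape_div (hx : IsUnduloid a x) (ha : 0 < a) (ha' : a ≤ 1 / 2) (t : ℝ) :
    deriv (zshape a x) t / x t = x t + a * (1 - a) / x t := by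
  rw [deriv_zshape hx.1.continuous]
  field_simp [(hx.pos ha ha' t).ne']
  ring

lemma isDuffingSolution_add_const_div (hx : IsUnduloid a x) (ha : 0 < a) (ha' : a ≤ 1 / 2) :
    IsDuffingSolution (1 + 4 * (a * (1 - a))) (fun t => x t + a * (1 - a) / x t) := by
  rw [show 1 + 4 * (a * (1 - a)) = 1 - 2 * (a * (1 - a)) + 6 * (a * (1 - a)) by ring]
  exact hx.isDuffingSolution.add_of_mul_eq (hx.isDuffingSolution_const_div ha ha')
    fun t => mul_div_cancel₀ _ (hx.pos ha ha' t).ne'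

lemma periodic_add_const_div (hx : IsUnduloid a x) (ha : 0 < a) (ha' : a ≤ 1 / 2)
    (hτ : IsMinPeriod x (2 * τ)) : Function.Periodic (fun t => x t + a * (1 - a) / x t) τ :=
  fun t => by
    simp only [hx.apply_add_half_period ha ha' hτ t]
    field_simp [(hx.pos ha ha' t).ne', show 1 - a ≠ 0 by linarith]
    ring

end IsUnduloid

/-- properties of w_a = z_a'/x_a for a ∈ (0,1/4). -/
theorem statement15 (a : ℝ) (ha : a ∈ Set.Ioo (0:ℝ) (1/4)) (x : ℝ → ℝ) (τ : ℝ)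
    (hx : IsUnduloid a x) (hτ : IsMinPeriod x (2 * τ)) :
    let w : ℝ → ℝ := fun t => deriv (zshape a x) t / x t
    -- (i)
    ((∀ t, deriv (deriv w) t = (1 + 4 * (a * (1 - a))) * w t - 2 * w t ^ 3) ∧
     (∀ t, deriv w t ^ 2 = (1 - w t ^ 2) * (w t ^ 2 - 4 * (a * (1 - a))))) ∧
    -- (ii)
    ((∀ t, 0 < w t ∧ w t ≤ 1) ∧ w 0 = 1 ∧ (∀ t, w (-t) = w t) ∧
      Function.Periodic w τ) ∧
    -- (iii)
    (w (τ / 2) = 2 * Real.sqrt (a * (1 - a)) ∧ (∀ t, w (τ / 2) ≤ w t) ∧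
      x (τ / 2) ^ 2 = a * (1 - a)) := by
  intro w
  obtain ⟨ha, ha'⟩ := ha
  replace ha' : a ≤ 1 / 2 := by linarith
  have hw : w = fun t => x t + a * (1 - a) / x t := funext (hx.deriv_zshape_div ha ha')
  have hsol : IsDuffingSolution (1 + 4 * (a * (1 - a))) w :=
    hw ▸ hx.isDuffingSolution_add_const_div ha ha'
  have heven : Function.Even w := fun t => by rw [hw]; simp only [hx.even ha ha' t]
  have hw0 : w 0 = 1 := by
    rw [hw]
    simp only [hx.2.2.1, mul_div_cancel_right₀ _ (show 1 - a ≠ 0 by linarith)]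
    ring
  have hquarter := hx.sq_apply_quarter_period ha ha' hτ
  have hmin : w (τ / 2) = 2 * √(a * (1 - a)) := by
    rw [hw, ← hquarter, Real.sqrt_sq (hx.pos ha ha' _).le]
    field_simp [(hx.pos ha ha' _).ne']
    ring
  have hper : Function.Periodic w τ := hw ▸ hx.periodic_add_const_div ha ha' hτ
  refine ⟨⟨hsol.2, fun t => ?_⟩, ⟨fun t => ?_, hw0, heven, hper⟩, hmin, fun t => ?_, hquarter⟩
  · rw [hsol.deriv_sq_of_even heven t, hw0]
    ring
  · have hxt := hx.pos ha ha' t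
    have hγ : 0 < a * (1 - a) := mul_pos ha (by linarith)
    rw [hw]
    exact ⟨by positivity, add_mul_one_sub_div_le_one ha (hx.mem_Icc ha ha' t)⟩
  · rw [hmin, hw]
    exact two_mul_sqrt_le_add_div (by nlinarith) (hx.pos ha ha' t)

end
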